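/- arXiv:1109.5347 — 3 statements merged into one kernel-verified Lean document; each statement's English description precedes it below -/
import Mathlib

section
/- Let B be a C*-algebra and u ∈ B a selfadjoint partial isometry, written u = p - q with p, q mutually orthogonal projections. Suppose that every norm-one functional f on B with f(u) = 1 is a state (i.e. positive with f(1)=1 after unitization). Then q = 0, so u is a projection. -/
open scoped ComplexOrder

/-!
If `q ≠ 0`, Hahn–Banach gives a norm-one functional `g` with `g q = 1`. For `‖t‖ ≤ 1` the
C*-identity turns `‖q + t • p‖²` into the norm of `q + ‖t‖² • p`, a convex combination of the
projections `p + q` and `q`, so `‖q + t • p‖ ≤ 1`; rotating `t` against `g p` then forces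
`g p = 0`. Hence `-g` has norm one and `(-g) u = 1`, but `(-g) q = -1`, so `-g` is not positive.
-/

namespace IsStarProjection

lemma mul_eq_zero_of_mul_eq_zero {R : Type*} [NonUnitalNonAssocSemiring R] [StarRing R] {p q : R}
    (hp : IsStarProjection p) (hq : IsStarProjection q) (h : q * p = 0) : p * q = 0 := by
  simpa [hp.isSelfAdjoint.star_eq, hq.isSelfAdjoint.star_eq] using congr_arg star h

lemma star_add_smul_mul_add_smul {R A : Type*} [CommSemiring R] [StarRing R]
    [NonUnitalSemiring A] [StarRing A] [Module R A] [StarModule R A] [IsScalarTower R A A]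
    [SMulCommClass R A A] {p q : A} (hp : IsStarProjection p) (hq : IsStarProjection q)
    (hqp : q * p = 0) (t : R) :
    star (q + t • p) * (q + t • p) = q + (star t * t) • p := by
  simp only [star_add, star_smul, hp.isSelfAdjoint.star_eq, hq.isSelfAdjoint.star_eq, add_mul,
    mul_add, smul_mul_assoc, mul_smul_comm, smul_smul, hp.isIdempotentElem.eq,
    hq.isIdempotentElem.eq, hp.mul_eq_zero_of_mul_eq_zero hq hqp, hqp, smul_zero, add_zero,
    zero_add, mul_comm t]

section CStarRing

variable {A : Type*} [NonUnitalNormedRing A] [StarRing A] [CStarRing A] {p q : A}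

lemma norm_eq_one (hp : IsStarProjection p) (h : p ≠ 0) : ‖p‖ = 1 := by
  have : ‖p‖ * ‖p‖ = ‖p‖ := by
    rw [← CStarRing.norm_star_mul_self, hp.isSelfAdjoint.star_eq, hp.isIdempotentElem.eq]
  exact (mul_eq_right₀ (norm_ne_zero_iff.mpr h)).mp this

variable {𝕜 : Type*} [RCLike 𝕜] [NormedSpace 𝕜 A]

lemma norm_add_ofReal_smul_le_one (hp : IsStarProjection p) (hq : IsStarProjection q)
    (hqp : q * p = 0) {s : ℝ} (hs₀ : 0 ≤ s) (hs₁ : s ≤ 1) :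
    ‖q + (s : 𝕜) • p‖ ≤ 1 := by
  have hsum : IsStarProjection (p + q) := hp.add hq (hp.mul_eq_zero_of_mul_eq_zero hq hqp)
  calc ‖q + (s : 𝕜) • p‖ = ‖(s : 𝕜) • (p + q) + ((1 - s : ℝ) : 𝕜) • q‖ := by
        congr 1; push_cast; module
    _ ≤ s * ‖p + q‖ + (1 - s) * ‖q‖ := by
        refine (norm_add_le _ _).trans (add_le_add ?_ ?_) <;>
          rw [norm_smul, RCLike.norm_ofReal, abs_of_nonneg (by linarith)]
    _ ≤ s * 1 + (1 - s) * 1 := by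
        gcongr
        exacts [hsum.norm_le, hq.norm_le]
    _ = 1 := by ring

variable [StarModule 𝕜 A] [IsScalarTower 𝕜 A A] [SMulCommClass 𝕜 A A]

lemma norm_add_smul_le_one (hp : IsStarProjection p) (hq : IsStarProjection q)
    (hqp : q * p = 0) {t : 𝕜} (ht : ‖t‖ ≤ 1) :
    ‖q + t • p‖ ≤ 1 := by
  have hsq : ‖q + t • p‖ * ‖q + t • p‖ ≤ 1 := by
    rw [← CStarRing.norm_star_mul_self, star_add_smul_mul_add_smul hp hq hqp, RCLike.star_def,
      RCLike.conj_mul, ← RCLike.ofReal_pow]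
    exact norm_add_ofReal_smul_le_one hp hq hqp (by positivity) (pow_le_one₀ (norm_nonneg t) ht)
  nlinarith [norm_nonneg (q + t • p)]

end CStarRing

end IsStarProjection

lemma StrongDual.apply_eq_zero_of_norm_add_smul_le_one {𝕜 E : Type*} [RCLike 𝕜]
    [NormedAddCommGroup E] [NormedSpace 𝕜 E] {f : StrongDual 𝕜 E} (hf : ‖f‖ ≤ 1) {x y : E}
    (hfx : f x = 1) (h : ∀ t : 𝕜, ‖t‖ ≤ 1 → ‖x + t • y‖ ≤ 1) : f y = 0 := by
  set c := f y
  have ht : ‖(‖c‖ : 𝕜) / c‖ ≤ 1 := by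
    rw [norm_div, RCLike.norm_ofReal, abs_norm]
    exact div_self_le_one _
  have hval : f (x + ((‖c‖ : 𝕜) / c) • y) = ((1 + ‖c‖ : ℝ) : 𝕜) := by
    rw [map_add, map_smul, hfx, smul_eq_mul, div_mul_cancel_of_imp (by simp_all)]
    push_cast; rfl
  have : 1 + ‖c‖ ≤ 1 := calc
    1 + ‖c‖ = ‖f (x + ((‖c‖ : 𝕜) / c) • y)‖ := by
      rw [hval, RCLike.norm_ofReal, abs_of_nonneg (by positivity)]
    _ ≤ ‖f‖ * ‖x + ((‖c‖ : 𝕜) / c) • y‖ := f.le_opNorm _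
    _ ≤ 1 := mul_le_one₀ hf (norm_nonneg _) (h _ ht)
  exact norm_le_zero_iff.mp (by linarith)

theorem stmt7_general {B : Type*} [NormedRing B] [StarRing B] [CStarRing B]
    [NormedAlgebra ℂ B] [StarModule ℂ B]
    [PartialOrder B] [StarOrderedRing B]
    (u p q : B) (hp : IsIdempotentElem p) (hpsa : IsSelfAdjoint p)
    (hq : IsIdempotentElem q) (hqsa : IsSelfAdjoint q)
    (hqp : q * p = 0) (hu : u = p - q)
    (hstates : ∀ f : B →L[ℂ] ℂ, ‖f‖ = 1 → f u = 1 →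
      (f 1 = 1 ∧ ∀ b : B, 0 ≤ b → 0 ≤ f b)) :
    q = 0 := by
  have hP : IsStarProjection p := ⟨hp, hpsa⟩
  have hQ : IsStarProjection q := ⟨hq, hqsa⟩
  by_contra hq0
  obtain ⟨g, hg, hgq⟩ := exists_dual_vector ℂ q (norm_ne_zero_iff.mpr hq0)
  rw [hQ.norm_eq_one hq0, RCLike.ofReal_one] at hgq
  have hgp : g p = 0 := StrongDual.apply_eq_zero_of_norm_add_smul_le_one hg.le hgq
    fun _ ht ↦ hP.norm_add_smul_le_one hQ hqp ht
  obtain ⟨-, hpos⟩ := hstates (-g) (by rwa [norm_neg]) (by simp [hu, hgp, hgq])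
  exact absurd (hpos q hQ.nonneg) (by norm_num [hgq])

/-- If `u = p - q` is a selfadjoint partial isometry in a unital C*-algebra `B`, with `p, q`
mutually orthogonal projections, and every norm-one functional `f` with `f(u) = 1` is a
state (positive with `f(1) = 1`), then `q = 0` and `u` is a projection. -/
theorem stmt7 {B : Type*} [NormedRing B] [StarRing B] [CStarRing B] [NormOneClass B]
    [NormedAlgebra ℂ B] [StarModule ℂ B] [CompleteSpace B]
    [PartialOrder B] [StarOrderedRing B]
    (u p q : B) (hp : IsIdempotentElem p) (hpsa : IsSelfAdjoint p)
    (hq : IsIdempotentElem q) (hqsa : IsSelfAdjoint q)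
    (hpq : p * q = 0) (hqp : q * p = 0) (hu : u = p - q)
    (hstates : ∀ f : B →L[ℂ] ℂ, ‖f‖ = 1 → f u = 1 →
      (f 1 = 1 ∧ ∀ b : B, 0 ≤ b → 0 ≤ f b)) :
    q = 0 :=
  stmt7_general u p q hp hpsa hq hqsa hqp hu hstates
end

section
/- Let A be a unital operator algebra inside a C*-algebra B, and let p ∈ A be a projection. Then the set [p]_A = {a ∈ A : ‖1 - 2a‖ ≤ 1 and ap = a} is a face of the convex set (1/2)𝔉_A = {a ∈ A : ‖1 - 2a‖ ≤ 1}: if x, y ∈ (1/2)𝔉_A and (x+y)/2 ∈ [p]_A, then x, y ∈ [p]_A. -/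
/-! Put `u = 2x`, `v = 2y` and `q = 1 - p`. Expanding `(1 - u)⋆(1 - u) ≤ 1` shows that
`‖1 - u‖ ≤ 1` forces `u⋆u ≤ u + u⋆`. The midpoint hypothesis says `(u + v)q = 0`, hence
`q(u + u⋆)q + q(v + v⋆)q = 0`; both summands are positive, so both vanish, and then
`(uq)⋆(uq) = q u⋆u q ≤ q(u + u⋆)q = 0` gives `uq = 0`, i.e. `xp = x`, and likewise for `y`. -/

section CStarAlgebra

variable {A : Type*} [CStarAlgebra A] [PartialOrder A] [StarOrderedRing A]

lemma star_mul_self_le_add_star_of_norm_one_sub_le_one {u : A} (hu : ‖1 - u‖ ≤ 1) :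
    star u * u ≤ u + star u := by
  have hle : star (1 - u) * (1 - u) ≤ 1 := by
    rw [← CStarAlgebra.norm_le_one_iff_of_nonneg _ (star_mul_self_nonneg _),
      CStarRing.norm_star_mul_self]
    exact mul_le_one₀ hu (norm_nonneg _) hu
  have hexpand : star (1 - u) * (1 - u) = 1 - ((u + star u) - star u * u) := by
    simp only [star_sub, star_one]
    noncomm_ring
  rwa [hexpand, sub_le_self_iff, sub_nonneg] at hle

lemma conj_add_star_nonneg_of_norm_one_sub_le_one {u q : A} (hu : ‖1 - u‖ ≤ 1)
    (hq : IsSelfAdjoint q) : 0 ≤ q * (u + star u) * q := by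
  have h := star_left_conjugate_nonneg
    ((star_mul_self_nonneg u).trans (star_mul_self_le_add_star_of_norm_one_sub_le_one hu)) q
  rwa [hq.star_eq] at h

lemma mul_eq_zero_of_conj_add_star_eq_zero {u q : A} (hu : ‖1 - u‖ ≤ 1)
    (hq : IsSelfAdjoint q) (h : q * (u + star u) * q = 0) : u * q = 0 := by
  have hconj : star (u * q) * (u * q) = q * (star u * u) * q := by
    rw [star_mul, hq.star_eq]
    noncomm_ring
  have hle := star_left_conjugate_le_conjugate
    (star_mul_self_le_add_star_of_norm_one_sub_le_one hu) q
  rw [hq.star_eq, h, ← hconj] at hle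
  exact CStarRing.star_mul_self_eq_zero_iff _ |>.mp
    (le_antisymm hle (star_mul_self_nonneg _))

theorem mul_eq_zero_of_add_mul_eq_zero_of_norm_one_sub_le_one {u v q : A}
    (hu : ‖1 - u‖ ≤ 1) (hv : ‖1 - v‖ ≤ 1) (hq : IsSelfAdjoint q) (h : (u + v) * q = 0) :
    u * q = 0 ∧ v * q = 0 := by
  have h' : q * (star u + star v) = 0 := by
    simpa only [star_mul, star_add, hq.star_eq, star_zero] using congrArg star h
  have hsum : q * (u + star u) * q + q * (v + star v) * q = 0 := by
    calc q * (u + star u) * q + q * (v + star v) * q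
        = q * ((u + v) * q) + q * (star u + star v) * q := by noncomm_ring
      _ = 0 := by rw [h, h', mul_zero, zero_mul, add_zero]
  obtain ⟨hu0, hv0⟩ := (add_eq_zero_iff_of_nonneg
    (conj_add_star_nonneg_of_norm_one_sub_le_one hu hq)
    (conj_add_star_nonneg_of_norm_one_sub_le_one hv hq)).mp hsum
  exact ⟨mul_eq_zero_of_conj_add_star_eq_zero hu hq hu0,
    mul_eq_zero_of_conj_add_star_eq_zero hv hq hv0⟩

end CStarAlgebra

lemma mul_eq_self_of_two_smul_mul_one_sub_eq_zero {R : Type*} [Ring R] [IsAddTorsionFree R]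
    {x p : R} (h : (2 • x) * (1 - p) = 0) : x * p = x := by
  rw [smul_mul_assoc, smul_eq_zero, mul_sub, mul_one, sub_eq_zero] at h
  exact (h.resolve_left two_ne_zero).symm

theorem stmt9_general {B : Type*} [NormedRing B] [StarRing B] [CStarRing B]
    [NormedAlgebra ℂ B] [StarModule ℂ B] [CompleteSpace B]
    (p : B) (hpsa : IsSelfAdjoint p)
    (x y : B)
    (hx : ‖(1 : B) - 2 • x‖ ≤ 1) (hy : ‖(1 : B) - 2 • y‖ ≤ 1)
    (hmid : ((2 : ℂ)⁻¹ • (x + y)) * p = (2 : ℂ)⁻¹ • (x + y)) :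
    x * p = x ∧ y * p = y := by
  let _ : CStarAlgebra B := {}
  let _ := CStarAlgebra.spectralOrder B
  have _ := CStarAlgebra.spectralOrderedRing B
  have _ := IsAddTorsionFree.of_isTorsionFree ℂ B
  have hsum : (x + y) * p = x + y := by
    rw [smul_mul_assoc] at hmid
    exact smul_right_injective B (inv_ne_zero two_ne_zero) hmid
  have hkill : (2 • x + 2 • y) * (1 - p) = 0 := by
    rw [← smul_add, smul_mul_assoc, mul_sub, mul_one, hsum, sub_self, smul_zero]
  obtain ⟨hx0, hy0⟩ := mul_eq_zero_of_add_mul_eq_zero_of_norm_one_sub_le_one hx hy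
    ((IsSelfAdjoint.one B).sub hpsa) hkill
  exact ⟨mul_eq_self_of_two_smul_mul_one_sub_eq_zero hx0,
    mul_eq_self_of_two_smul_mul_one_sub_eq_zero hy0⟩

/-- For a projection `p` in a unital operator algebra `A ⊆ B`, the set
`[p]_A = {a ∈ A : ‖1 - 2a‖ ≤ 1, ap = a}` is a face of `(1/2)𝔉_A`: if `x, y ∈ (1/2)𝔉_A`
and their midpoint lies in `[p]_A`, then `x, y ∈ [p]_A`. -/
theorem stmt9 {B : Type*} [NormedRing B] [StarRing B] [CStarRing B] [NormOneClass B]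
    [NormedAlgebra ℂ B] [StarModule ℂ B] [CompleteSpace B]
    (A : Subalgebra ℂ B) (hA : IsClosed (A : Set B))
    (p : B) (hp : IsIdempotentElem p) (hpsa : IsSelfAdjoint p) (hpA : p ∈ A)
    (x y : B) (hxA : x ∈ A) (hyA : y ∈ A)
    (hx : ‖(1 : B) - 2 • x‖ ≤ 1) (hy : ‖(1 : B) - 2 • y‖ ≤ 1)
    (hmid : ((2 : ℂ)⁻¹ • (x + y)) * p = (2 : ℂ)⁻¹ • (x + y)) :
    x * p = x ∧ y * p = y :=
  stmt9_general p hpsa x y hx hy hmid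
end

section
/- Let A be a unital operator algebra inside a C*-algebra B, and let p, q ∈ A be projections. Then [p,q]_A = {a ∈ A : ‖1 - 2a‖ ≤ 1, aq = q, ap = a} is a face of (1/2)𝔉_A = {a ∈ A : ‖1 - 2a‖ ≤ 1}: if x, y ∈ (1/2)𝔉_A with (x+y)/2 ∈ [p,q]_A, then x, y ∈ [p,q]_A. -/
/-!
Write `r = 2x - 1` and `s = 2y - 1`, which are contractions. If `(x + y) c = 2c`, then
`r c + s c = 2c`, while `(r c)^* (r c) ≤ c^* c` and `(s c)^* (s c) ≤ c^* c`; the parallelogram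
identity then forces `(r c - s c)^* (r c - s c) ≤ 0`, so `r c = s c = c`, i.e. `x c = c`.
The condition `x p = x` is the same statement for `1 - x`, `1 - y` and `1 - p`.
-/

section Parallelogram

variable {B : Type*} [NonUnitalNormedRing B] [StarRing B] [CStarRing B] [PartialOrder B]
  [StarOrderedRing B]

theorem eq_of_add_eq_add_self_of_star_mul_self_le {a b w : B} (ha : star a * a ≤ star w * w)
    (hb : star b * b ≤ star w * w) (hab : a + b = w + w) : a = b := by
  have parallelogram : star (a - b) * (a - b) + star (a + b) * (a + b) =
      2 • (star a * a + star b * b) := by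
    simp only [star_sub, star_add]; noncomm_ring
  have hsum : star (a + b) * (a + b) = 2 • (star w * w + star w * w) := by
    rw [hab, star_add]; noncomm_ring
  have hle : star (a - b) * (a - b) ≤ 0 := by
    have := nsmul_le_nsmul_right (add_le_add ha hb) 2
    rw [← parallelogram, hsum] at this
    exact add_le_iff_nonpos_left.mp this
  exact sub_eq_zero.mp <| (CStarRing.star_mul_self_eq_zero_iff _).mp <|
    le_antisymm hle (star_mul_self_nonneg _)

end Parallelogram

section CStarAlgebra

variable {B : Type*} [CStarAlgebra B]

theorem star_mul_mul_le_star_mul_self_of_norm_le_one [PartialOrder B] [StarOrderedRing B]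
    {r : B} (hr : ‖r‖ ≤ 1) (c : B) : star (r * c) * (r * c) ≤ star c * c := by
  have hrr : star r * r ≤ 1 := by
    rw [← CStarAlgebra.norm_le_one_iff_of_nonneg _ (star_mul_self_nonneg r),
      CStarRing.norm_star_mul_self]
    nlinarith [norm_nonneg r]
  simpa [star_mul, mul_assoc] using star_left_conjugate_le_conjugate hrr c

theorem mul_eq_of_norm_le_one_of_add_mul_eq {r s c : B} (hr : ‖r‖ ≤ 1) (hs : ‖s‖ ≤ 1)
    (h : r * c + s * c = c + c) : r * c = c := by
  let : PartialOrder B := CStarAlgebra.spectralOrder B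
  let : StarOrderedRing B := CStarAlgebra.spectralOrderedRing B
  have hrs : r * c = s * c := eq_of_add_eq_add_self_of_star_mul_self_le
    (star_mul_mul_le_star_mul_self_of_norm_le_one hr c)
    (star_mul_mul_le_star_mul_self_of_norm_le_one hs c) h
  rw [← hrs, ← two_smul ℂ, ← two_smul ℂ] at h
  exact smul_right_injective B two_ne_zero h

theorem mul_eq_of_midpoint_mul_eq {x y c : B} (hx : ‖(1 : B) - 2 • x‖ ≤ 1)
    (hy : ‖(1 : B) - 2 • y‖ ≤ 1) (h : ((2 : ℂ)⁻¹ • (x + y)) * c = c) : x * c = c := by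
  have hxy : x * c + y * c = (2 : ℂ) • c := by
    rw [← add_mul, ← smul_inv_smul₀ (two_ne_zero' ℂ) (x + y), smul_mul_assoc, h]
  have key := mul_eq_of_norm_le_one_of_add_mul_eq (r := 2 • x - 1) (s := 2 • y - 1)
    (by rwa [norm_sub_rev]) (by rwa [norm_sub_rev]) (by
      simp only [sub_mul, one_mul, smul_mul_assoc]
      linear_combination (norm := module) (2 : ℂ) • hxy)
  simp only [sub_mul, one_mul, smul_mul_assoc] at key
  linear_combination (norm := module) (2 : ℂ)⁻¹ • key

theorem mul_eq_self_of_midpoint_mul_eq_self {x y c : B} (hx : ‖(1 : B) - 2 • x‖ ≤ 1)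
    (hy : ‖(1 : B) - 2 • y‖ ≤ 1) (h : ((2 : ℂ)⁻¹ • (x + y)) * c = (2 : ℂ)⁻¹ • (x + y)) :
    x * c = x := by
  have reflect : ∀ z : B, ‖(1 : B) - 2 • z‖ ≤ 1 → ‖(1 : B) - 2 • (1 - z)‖ ≤ 1 := fun z hz => by
    rwa [← norm_neg, show -((1 : B) - 2 • (1 - z)) = 1 - 2 • z by module]
  have key := mul_eq_of_midpoint_mul_eq (reflect x hx) (reflect y hy) (c := 1 - c) (by
    simp only [smul_add, smul_sub, add_mul, sub_mul, mul_sub, one_mul, mul_one,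
      smul_mul_assoc] at h ⊢
    linear_combination (norm := module) h)
  simp only [sub_mul, mul_sub, one_mul, mul_one] at key
  linear_combination (norm := module) key

end CStarAlgebra

theorem stmt10_general {B : Type*} [NormedRing B] [StarRing B] [CStarRing B]
    [NormedAlgebra ℂ B] [StarModule ℂ B] [CompleteSpace B]
    (p q : B)
    (x y : B)
    (hx : ‖(1 : B) - 2 • x‖ ≤ 1) (hy : ‖(1 : B) - 2 • y‖ ≤ 1)
    (hmidq : ((2 : ℂ)⁻¹ • (x + y)) * q = q)
    (hmidp : ((2 : ℂ)⁻¹ • (x + y)) * p = (2 : ℂ)⁻¹ • (x + y)) :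
    (x * q = q ∧ x * p = x) ∧ (y * q = q ∧ y * p = y) := by
  let _ : CStarAlgebra B := { }
  refine ⟨⟨?_, ?_⟩, ?_, ?_⟩
  · exact mul_eq_of_midpoint_mul_eq hx hy hmidq
  · exact mul_eq_self_of_midpoint_mul_eq_self hx hy hmidp
  · rw [add_comm] at hmidq
    exact mul_eq_of_midpoint_mul_eq hy hx hmidq
  · rw [add_comm] at hmidp
    exact mul_eq_self_of_midpoint_mul_eq_self hy hx hmidp

/-- Proposition 4.6 (faces): for projections `p, q` in a unital operator algebra `A ⊆ B`,
the set `[p,q]_A = {a ∈ A : ‖1 - 2a‖ ≤ 1, aq = q, ap = a}` is a face of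
`(1/2)𝔉_A = {a ∈ A : ‖1 - 2a‖ ≤ 1}`. -/
theorem stmt10 {B : Type*} [NormedRing B] [StarRing B] [CStarRing B] [NormOneClass B]
    [NormedAlgebra ℂ B] [StarModule ℂ B] [CompleteSpace B]
    (A : Subalgebra ℂ B) (hA : IsClosed (A : Set B))
    (p q : B) (hp : IsIdempotentElem p) (hpsa : IsSelfAdjoint p) (hpA : p ∈ A)
    (hq : IsIdempotentElem q) (hqsa : IsSelfAdjoint q) (hqA : q ∈ A)
    (x y : B) (hxA : x ∈ A) (hyA : y ∈ A)
    (hx : ‖(1 : B) - 2 • x‖ ≤ 1) (hy : ‖(1 : B) - 2 • y‖ ≤ 1)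
    (hmidq : ((2 : ℂ)⁻¹ • (x + y)) * q = q)
    (hmidp : ((2 : ℂ)⁻¹ • (x + y)) * p = (2 : ℂ)⁻¹ • (x + y)) :
    (x * q = q ∧ x * p = x) ∧ (y * q = q ∧ y * p = y) :=
  stmt10_general p q x y hx hy hmidq hmidp
end
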